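/- Let R be a commutative ring and let a, e, p ∈ R satisfy a·e = p·e and a - 1 ∈ (e), the ideal generated by e. Then the image of a under the canonical map R → R[1/p] is a unit of R[1/p]. -/
import Mathlib

/-- If `a·e = p·e` and `a - 1` lies in the ideal generated by `e` in a commutative ring `R`,
then the image of `a` in the localization `R[1/p]` is a unit.
(Ring-theoretic content of one direction of Lemma 4.3 of the paper, with
`a = p_ε`, `e = 2_ε` in `R = \overline{ZF}_*(pt_k, pt_k)`.) -/
theorem isUnit_image_of_mul_eq_and_sub_one_mem
    {R : Type*} [CommRing R] (a e p : R)
    (h1 : a * e = p * e) (h2 : a - 1 ∈ Ideal.span ({e} : Set R)) :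
    IsUnit (algebraMap R (Localization.Away p) a) := by
  obtain ⟨c, hc⟩ := Ideal.mem_span_singleton'.mp h2
  have key : a * (1 + p - a) = p := by
    linear_combination (a - p) * hc - c * h1
  have hu : IsUnit (algebraMap R (Localization.Away p) (a * (1 + p - a))) := by
    rw [key]; exact IsLocalization.Away.algebraMap_isUnit p
  rw [map_mul] at hu
  exact isUnit_of_mul_isUnit_left hu
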